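/- arXiv:math/0309267 — 2 statements merged into one kernel-verified Lean document; each statement's English description precedes it below -/
import Mathlib

section
/- Let (R,m,k) be a Noetherian local ring and M an R-module such that Tor_1^R(M, N) = 0 for all finite-length R-modules N. Then for every m-primary ideal I of R and every x ∈ R, one has (I·M :_M x) = (I :_R x)·M; in particular if M = S is an R-algebra, I·S :_S x = (I :_R x)·S. -/
/-!
Put `J = I + xR`. As `m ^ n ⊆ I ⊆ J`, the module `R/J` has finite length, so `Tor₁(M, R/J) = 0`;
computed with a projective resolution of `R/J` that starts with `R → R/J`, this forces
`M ⊗ J → M` to be injective. Now suppose `x m ∈ I M`. Then `m ⊗ x ∈ M ⊗ J` has the same image in `M`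
as some `u` in the image of `M ⊗ I`, hence equals it. The map `J → R/(I : x)`, `i + r x ↦ r`, is
well defined and kills `I`, so it sends `m ⊗ x` to `m ⊗ 1 = 0` in `M ⊗ R/(I : x) = M/(I : x)M`.
-/

open IsLocalRing CategoryTheory TensorProduct

universe u

/-- The length of an `R`-module, encoded as the Krull dimension of its lattice of submodules. -/
noncomputable def moduleLength (R M : Type*) [CommRing R] [AddCommGroup M] [Module R M] :
    WithBot ℕ∞ :=
  Order.krullDim (Submodule R M)

/-- The Frobenius power `I^[q]`, the ideal generated by `q`-th powers of elements of `I`. -/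
def frobPow {R : Type*} [CommRing R] (I : Ideal R) (q : ℕ) : Ideal R :=
  Ideal.span ((fun x => x ^ q) '' (I : Set R))

/-- A Noetherian local ring is regular if its maximal ideal is generated by `dim R` elements. -/
def IsRegularLocalRing' (R : Type*) [CommRing R] [IsLocalRing R] : Prop :=
  IsNoetherianRing R ∧ ∃ s : Finset R,
    Ideal.span (s : Set R) = maximalIdeal R ∧ (s.card : WithBot ℕ∞) = ringKrullDim R

/-- Flatness of a ring homomorphism. -/
def RingHom.IsFlatHom {R S : Type*} [CommRing R] [CommRing S] (f : R →+* S) : Prop :=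
  @Module.Flat R S _ _ (Module.compHom S f)

/-- A (Noetherian) ring is regular if all of its localizations at primes are regular local. -/
def IsRegularRing' (R : Type u) [CommRing R] : Prop :=
  IsNoetherianRing R ∧ ∀ (p : Ideal R) [p.IsPrime], IsRegularLocalRing' (Localization.AtPrime p)

/-- A `k`-algebra is geometrically regular if it stays regular after base change to any
finite field extension of `k`. -/
def IsGeomRegular (k : Type u) [Field k] (A : Type u) [CommRing A] [Algebra k A] : Prop :=
  ∀ (K : Type u) [Field K] [Algebra k K], Module.Finite k K → IsRegularRing' (K ⊗[k] A)

/-- A ring is catenary if any two saturated chains of primes with the same endpoints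
have the same length. -/
def IsCatenary (R : Type u) [CommRing R] : Prop :=
  ∀ c₁ c₂ : LTSeries (PrimeSpectrum R),
    c₁.head = c₂.head → c₁.last = c₂.last →
    (∀ i : Fin c₁.length, c₁.toFun i.castSucc ⋖ c₁.toFun i.succ) →
    (∀ i : Fin c₂.length, c₂.toFun i.castSucc ⋖ c₂.toFun i.succ) →
    c₁.length = c₂.length

/-- A ring is universally catenary if every finitely generated algebra over it is catenary. -/
def IsUniversallyCatenary (R : Type u) [CommRing R] : Prop :=
  ∀ (S : Type u) [CommRing S] [Algebra R S], Algebra.FiniteType R S → IsCatenary S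

/-- J-2: the regular locus of every finitely generated algebra is open. -/
def IsJ2 (R : Type u) [CommRing R] : Prop :=
  ∀ (S : Type u) [CommRing S] [Algebra R S], Algebra.FiniteType R S →
    IsOpen {p : PrimeSpectrum S | IsRegularLocalRing' (Localization.AtPrime p.asIdeal)}

/-- G-ring: for each prime `p`, the formal fibers of `R_p` are geometrically regular. -/
def IsGRing (R : Type u) [CommRing R] : Prop :=
  ∀ (p : Ideal R) [p.IsPrime],
    ∀ (q : Ideal (Localization.AtPrime p)) [q.IsPrime],
      IsGeomRegular (ResidueField (Localization.AtPrime q))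
        ((ResidueField (Localization.AtPrime q)) ⊗[Localization.AtPrime p]
          (AdicCompletion (maximalIdeal (Localization.AtPrime p)) (Localization.AtPrime p)))

/-- Excellent ring: Noetherian, universally catenary, G-ring, and J-2. -/
def IsExcellentRing (R : Type u) [CommRing R] : Prop :=
  IsNoetherianRing R ∧ IsUniversallyCatenary R ∧ IsGRing R ∧ IsJ2 R

/-- `S` is a ring of `q`-th roots of `R`: the `q`-th power map on `S` is injective with image
exactly (the image of) `R`. -/
structure IsQthRootRing (R S : Type*) [CommRing R] [CommRing S] [Algebra R S] (q : ℕ) :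
    Prop where
  inj : Function.Injective (algebraMap R S)
  pow_inj : Function.Injective fun s : S => s ^ q
  pow_surj : ∀ s : S, ∃ r : R, s ^ q = algebraMap R S r

/-- An `R`-module has no free direct summand iff it admits no surjection onto `R`. -/
def NoFreeSummands (R M : Type*) [CommRing R] [AddCommGroup M] [Module R M] : Prop :=
  ∀ f : M →ₗ[R] R, ¬ Function.Surjective f

/-- `R` is F-finite: `R` is module-finite over itself via the Frobenius endomorphism. -/
def IsFFinite (R : Type*) [CommRing R] (p : ℕ) [Fact p.Prime] [CharP R p] : Prop :=
  @Module.Finite R R _ _ (Module.compHom R (frobenius R p))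

/-- A non-increasing sequence of irreducible `m`-primary ideals `I t`, cofinal with the powers
of the maximal ideal, together with compatibly chosen socle representatives `u t`. -/
def SocleSeq (R : Type*) [CommRing R] [IsLocalRing R] (I : ℕ → Ideal R) (u : ℕ → R) : Prop :=
  Antitone I ∧
  (∀ n : ℕ, ∃ t, I t ≤ maximalIdeal R ^ n) ∧
  (∀ t, I t ≤ maximalIdeal R) ∧
  (∀ t, ∃ n, maximalIdeal R ^ n ≤ I t) ∧
  (∀ t, ∀ J K : Ideal R, I t = J ⊓ K → I t = J ∨ I t = K) ∧
  (∀ t, u t ∉ I t) ∧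
  (∀ t, ∀ r ∈ maximalIdeal R, r * u t ∈ I t) ∧
  (∀ t, ∃ c : R, (∀ x ∈ I t, x * c ∈ I (t + 1)) ∧
      (∀ x : R, x * c ∈ I (t + 1) → x ∈ I t) ∧ u (t + 1) - u t * c ∈ I (t + 1))

namespace CategoryTheory

open Limits

variable {C : Type*} [Category C] [Abelian C] [EnoughProjectives C] {P Z : C}

lemma Projective.d_comp {X Y : C} (f : X ⟶ Y) : Projective.d f ≫ f = 0 :=
  (Category.assoc _ _ _).trans ((congrArg _ (kernel.condition f)).trans comp_zero)

namespace ProjectiveResolution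

noncomputable def ofEpiComplex (π : P ⟶ Z) : ChainComplex C ℕ :=
  ChainComplex.mk' P (Projective.syzygies π) (Projective.d π)
    fun f ↦ ⟨_, Projective.d f, Projective.d_comp f⟩

lemma ofEpiComplex_d_1_0 (π : P ⟶ Z) : (ofEpiComplex π).d 1 0 = Projective.d π :=
  ChainComplex.mk'_d_1_0 ..

lemma ofEpiComplex_exactAt_succ (π : P ⟶ Z) (n : ℕ) : (ofEpiComplex π).ExactAt (n + 1) := by
  rw [HomologicalComplex.exactAt_iff' _ (n + 1 + 1) (n + 1) n (by simp) (by simp)]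
  refine ShortComplex.exact_of_iso ?_ (exact_d_f ((ofEpiComplex π).d (n + 1) n))
  refine ShortComplex.isoMk (ChainComplex.mk'XIso P (Projective.syzygies π) (Projective.d π)
    (fun f ↦ ⟨_, Projective.d f, Projective.d_comp f⟩) n).symm (Iso.refl _) (Iso.refl _) ?_ ?_
  · exact ((congrArg _ (ChainComplex.mk'_d _ _ _ _ n)).trans (Iso.inv_hom_id_assoc _ _)).trans
      (Category.comp_id _).symm
  · exact (Category.id_comp _).trans (Category.comp_id _).symm

instance (π : P ⟶ Z) [Projective P] (n : ℕ) : Projective ((ofEpiComplex π).X n) := by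
  obtain (_ | _ | _ | n) := n
  · assumption
  all_goals apply Projective.projective_over

noncomputable def ofEpi (π : P ⟶ Z) [Projective P] [Epi π] : ProjectiveResolution Z where
  complex := ofEpiComplex π
  π := (ChainComplex.toSingle₀Equiv _ _).symm
    ⟨π, by rw [ofEpiComplex_d_1_0]; exact Projective.d_comp π⟩
  quasiIso := ⟨fun n ↦ by
    cases n
    · rw [ChainComplex.quasiIsoAt₀_iff, ShortComplex.quasiIso_iff_of_zeros']
      · refine (ShortComplex.exact_and_epi_g_iff_of_iso ?_).2 ⟨exact_d_f π, ‹Epi π›⟩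
        refine ShortComplex.isoMk (Iso.refl _) (Iso.refl _) (Iso.refl _) ?_ ?_ <;> dsimp
        · exact (Category.id_comp _).trans
            ((ofEpiComplex_d_1_0 π).symm.trans (Category.comp_id _).symm)
        · erw [Category.id_comp, Category.comp_id]
          exact (ChainComplex.toSingle₀Equiv_symm_apply_f_zero (C := ofEpiComplex π) (X := Z) π
            _).symm
      all_goals rfl
    · rw [quasiIsoAt_iff_exactAt']
      · apply ofEpiComplex_exactAt_succ
      · apply ChainComplex.exactAt_succ_single_obj⟩

end ProjectiveResolution
end CategoryTheory

theorem IsLocalRing.isFiniteLength_quotient_of_maximalIdeal_pow_le {R : Type*} [CommRing R]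
    [IsLocalRing R] [IsNoetherianRing R] {J : Ideal R} {n : ℕ} (hJ : maximalIdeal R ^ n ≤ J) :
    IsFiniteLength R (R ⧸ J) := by
  have : Ring.KrullDimLE 0 (R ⧸ J) := Ring.krullDimLE_zero_iff.2 fun P hP ↦ by
    have hP' := hP.comap (algebraMap R (R ⧸ J))
    have hle : maximalIdeal R ≤ P.comap (algebraMap R (R ⧸ J)) :=
      hP'.le_of_pow_le (hJ.trans (Ideal.mk_ker.symm.trans_le (Ideal.ker_le_comap _)))
    refine Ideal.isMaximal_of_isIntegral_of_isMaximal_comap (R := R) _ ?_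
    rw [← (maximalIdeal.isMaximal R).eq_of_le hP'.ne_top hle]
    exact maximalIdeal.isMaximal R
  have : IsArtinianRing (R ⧸ J) := IsNoetherianRing.isArtinianRing_of_krullDimLE_zero
  rw [isFiniteLength_iff_isNoetherian_isArtinian]
  exact ⟨isNoetherian_quotient J,
    isArtinian_of_surjective_algebraMap (Ideal.Quotient.mk_surjective (I := J))⟩

namespace Ideal

variable {A : Type*} [CommRing A]

theorem exists_linearMap_sup_span_singleton_to_quotient_colon (I : Ideal A) (x : A) :
    ∃ φ : ↥(I ⊔ span {x}) →ₗ[A] A ⧸ I.colon (span {x}),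
      ∀ (j : ↥(I ⊔ span {x})) (r : A), (j : A) - r * x ∈ I →
        φ j = Quotient.mk _ r := by
  let s : (A ⧸ I.colon (span {x})) →ₗ[A] A ⧸ I :=
    Submodule.mapQ _ I (LinearMap.toSpanSingleton A A x)
      fun r hr ↦ by simpa using mem_colon_span_singleton.1 hr
  have hs_mk (r : A) : s (Quotient.mk _ r) = Quotient.mk I (r * x) := rfl
  have hs : Function.Injective s := by
    refine (injective_iff_map_eq_zero s).2 fun r hr ↦ ?_
    obtain ⟨r, rfl⟩ := Quotient.mk_surjective r
    rw [hs_mk, Quotient.eq_zero_iff_mem] at hr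
    exact Quotient.eq_zero_iff_mem.2 (mem_colon_span_singleton.2 hr)
  have hrange (j : ↥(I ⊔ span {x})) : I.mkQ j ∈ LinearMap.range s := by
    obtain ⟨i, hi, y, hy, hj⟩ := Submodule.mem_sup.1 j.2
    obtain ⟨r, rfl⟩ := mem_span_singleton'.1 hy
    refine ⟨Quotient.mk _ r, ?_⟩
    rw [hs_mk, ← hj]
    exact Quotient.eq.2 (by simpa using I.neg_mem hi)
  refine ⟨(LinearEquiv.ofInjective s hs).symm.toLinearMap ∘ₗ
    (I.mkQ ∘ₗ (I ⊔ span {x}).subtype).codRestrict _ hrange, fun j r hjr ↦ hs ?_⟩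
  rw [LinearMap.comp_apply, LinearEquiv.coe_coe, LinearEquiv.ofInjective_symm_apply, hs_mk]
  exact Quotient.eq.2 hjr

variable {M : Type*} [AddCommGroup M] [Module A M]

theorem colon_span_singleton_smul_top_le_comap_lsmul (I : Ideal A) (x : A) :
    I.colon (span {x}) • (⊤ : Submodule A M) ≤
      (I • (⊤ : Submodule A M)).comap (LinearMap.lsmul A M x) := by
  refine Submodule.smul_le.2 fun r hr m _ ↦ ?_
  rw [Submodule.mem_comap, LinearMap.lsmul_apply, smul_smul, mul_comm]
  exact Submodule.smul_mem_smul (mem_colon_span_singleton.1 hr) trivial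

theorem comap_lsmul_smul_top_eq_of_lTensor_injective (I : Ideal A) (x : A)
    (hinj : Function.Injective ((I ⊔ span {x}).subtype.lTensor M)) :
    (I • (⊤ : Submodule A M)).comap (LinearMap.lsmul A M x) =
      I.colon (span {x}) • (⊤ : Submodule A M) := by
  refine le_antisymm (fun m hm ↦ ?_) (I.colon_span_singleton_smul_top_le_comap_lsmul x)
  rw [Submodule.mem_comap, LinearMap.lsmul_apply] at hm
  obtain ⟨φ, hφ⟩ := I.exists_linearMap_sup_span_singleton_to_quotient_colon x
  have hφI (i : ↥(I ⊔ span {x})) (hi : (i : A) ∈ I) : φ i = 0 := by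
    simpa using hφ i 0 (by simpa using hi)
  have hφx : φ ⟨x, mem_sup_right (mem_span_singleton_self x)⟩ = 1 :=
    hφ _ 1 (by simp)
  obtain ⟨u, hu, hφu⟩ : ∃ u, (I ⊔ span {x}).subtype.lTensor M u = (x • m) ⊗ₜ 1 ∧
      φ.lTensor M u = 0 := by
    refine Submodule.smul_induction_on hm (fun r hr n _ ↦ ?_) fun a b ⟨u, hu, hφu⟩ ⟨v, hv, hφv⟩ ↦
      ⟨u + v, by rw [map_add, hu, hv, add_tmul], by rw [map_add, hφu, hφv, add_zero]⟩
    refine ⟨n ⊗ₜ ⟨r, mem_sup_left hr⟩, ?_, ?_⟩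
    · rw [LinearMap.lTensor_tmul, smul_tmul, smul_eq_mul, mul_one]
      rfl
    · rw [LinearMap.lTensor_tmul, hφI _ hr, tmul_zero]
  have hu_eq : u = m ⊗ₜ ⟨x, mem_sup_right (mem_span_singleton_self x)⟩ :=
    hinj (by rw [hu, LinearMap.lTensor_tmul, smul_tmul, smul_eq_mul, mul_one]; rfl)
  rw [hu_eq, LinearMap.lTensor_tmul, hφx] at hφu
  have hm_quot := congrArg (tensorQuotEquivQuotSMul M (I.colon (span {x}))) hφu
  rwa [← map_one (Quotient.mk _), tensorQuotEquivQuotSMul_tmul_mk, one_smul, map_zero,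
    Submodule.Quotient.mk_eq_zero] at hm_quot

end Ideal

section Tor

variable {A : Type u} [CommRing A] (M : Type u) [AddCommGroup M] [Module A M]

theorem CategoryTheory.ProjectiveResolution.ker_lTensor_le_range_of_subsingleton_tor_one
    {N : ModuleCat.{u} A} (P : ProjectiveResolution N)
    (htor : Subsingleton (((Tor (ModuleCat.{u} A) 1).obj (ModuleCat.of A M)).obj N)) :
    LinearMap.ker ((P.complex.d 1 0).hom.lTensor M) ≤
      LinearMap.range ((P.complex.d 2 1).hom.lTensor M) := by
  let F := (MonoidalCategory.tensoringLeft (ModuleCat.{u} A)).obj (ModuleCat.of A M)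
  have hexact : ((F.mapHomologicalComplex _).obj P.complex).ExactAt 1 :=
    (HomologicalComplex.exactAt_iff_isZero_homology _ _).2 <|
      (@ModuleCat.isZero_of_subsingleton _ _ _ htor).of_iso (P.isoLeftDerivedObj F 1).symm
  rw [HomologicalComplex.exactAt_iff' _ 2 1 0 (by simp) (by simp),
    ShortComplex.moduleCat_exact_iff_ker_sub_range] at hexact
  exact hexact

theorem Ideal.lTensor_subtype_injective_of_subsingleton_tor_one (J : Ideal A)
    (htor : Subsingleton (((Tor (ModuleCat.{u} A) 1).obj (ModuleCat.of A M)).obj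
      (ModuleCat.of A (A ⧸ J)))) :
    Function.Injective (J.subtype.lTensor M) := by
  have : Epi (ModuleCat.ofHom J.mkQ) := (ModuleCat.epi_iff_surjective _).2 J.mkQ_surjective
  let P := ProjectiveResolution.ofEpi (ModuleCat.ofHom J.mkQ)
  let d₁₀ : P.complex.X 1 →ₗ[A] A := (P.complex.d 1 0).hom
  have hd₁₀ : LinearMap.range d₁₀ = J := by
    have := (ShortComplex.moduleCat_exact_iff_range_eq_ker _).1 (exact_d_f (ModuleCat.ofHom J.mkQ))
    rwa [ModuleCat.hom_ofHom, J.ker_mkQ] at this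
  let e : P.complex.X 1 →ₗ[A] J := d₁₀.codRestrict J fun p ↦ hd₁₀.le (LinearMap.mem_range_self _ p)
  have he : Function.Surjective e := fun j ↦
    let ⟨p, hp⟩ := hd₁₀.ge j.2
    ⟨p, Subtype.ext hp⟩
  have he_comp : e ∘ₗ (P.complex.d 2 1).hom = 0 := LinearMap.ext fun v ↦ Subtype.ext <|
    LinearMap.congr_fun (congrArg ModuleCat.Hom.hom (P.complex.d_comp_d 2 1 0)) v
  refine (injective_iff_map_eq_zero _).2 fun z hz ↦ ?_
  obtain ⟨w, rfl⟩ := LinearMap.lTensor_surjective M he z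
  rw [← LinearMap.lTensor_comp_apply] at hz
  obtain ⟨v, rfl⟩ := P.ker_lTensor_le_range_of_subsingleton_tor_one M htor hz
  rw [← LinearMap.lTensor_comp_apply, he_comp, LinearMap.lTensor_zero, LinearMap.zero_apply]

end Tor

theorem colon_smul_of_tor_vanishing_general (R : Type u) [CommRing R] [IsLocalRing R]
    [IsNoetherianRing R] (M : Type u) [AddCommGroup M] [Module R M]
    (h : ∀ (N : Type u) [AddCommGroup N] [Module R N], IsFiniteLength R N →
      Subsingleton (((Tor (ModuleCat.{u} R) 1).obj (ModuleCat.of R M)).obj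
        (ModuleCat.of R N)))
    (I : Ideal R) (hI₂ : ∃ n, maximalIdeal R ^ n ≤ I) (x : R) :
    (I • (⊤ : Submodule R M)).comap (LinearMap.lsmul R M x) =
      (I.colon (Ideal.span {x})) • (⊤ : Submodule R M) := by
  obtain ⟨n, hn⟩ := hI₂
  have hJ : IsFiniteLength R (R ⧸ (I ⊔ Ideal.span {x})) :=
    isFiniteLength_quotient_of_maximalIdeal_pow_le (hn.trans le_sup_left)
  exact I.comap_lsmul_smul_top_eq_of_lTensor_injective x <|
    Ideal.lTensor_subtype_injective_of_subsingleton_tor_one M _ (h _ hJ)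

/-- If `Tor₁^R(M,N) = 0` for all finite-length `N`, then for every `m`-primary ideal `I`
and every `x ∈ R`, `(I·M :_M x) = (I :_R x)·M`. -/
theorem colon_smul_of_tor_vanishing (R : Type u) [CommRing R] [IsLocalRing R]
    [IsNoetherianRing R] (M : Type u) [AddCommGroup M] [Module R M]
    (h : ∀ (N : Type u) [AddCommGroup N] [Module R N], IsFiniteLength R N →
      Subsingleton (((Tor (ModuleCat.{u} R) 1).obj (ModuleCat.of R M)).obj
        (ModuleCat.of R N)))
    (I : Ideal R) (hI₁ : I ≤ maximalIdeal R) (hI₂ : ∃ n, maximalIdeal R ^ n ≤ I) (x : R) :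
    (I • (⊤ : Submodule R M)).comap (LinearMap.lsmul R M x) =
      (I.colon (Ideal.span {x})) • (⊤ : Submodule R M) :=
  colon_smul_of_tor_vanishing_general R M h I hI₂ x
end

section
/- Let (R,m) be a Noetherian local ring of prime characteristic p and I ⊆ R an irreducible m-primary ideal. If R → S is a faithfully flat local ring map with mS the maximal ideal of S, then IS is an irreducible mS-primary ideal of S. -/
/-!
Over a local ring, an `m`-primary ideal `I` is irreducible exactly when its socle `(I : m) / I` is
generated by one element `u`, i.e. `I : m = I + (u)`: every ideal strictly above `I` contains an
element of `(I : m) \ I`, which generates the same ideal as `u` modulo `I`. Flat base change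
commutes with colons by finitely generated ideals, so `IS : mS = (I : m)S = IS + (u)`, and
faithful flatness keeps `u` outside `IS`.
-/

open IsLocalRing CategoryTheory TensorProduct

universe u

section Flat

variable {R S : Type*} [CommRing R] [CommRing S] [Algebra R S]

theorem Ideal.tmul_one_eq_zero_iff_mem_map (A : Ideal R) (s : S) :
    s ⊗ₜ[R] (1 : R ⧸ A) = 0 ↔ s ∈ A.map (algebraMap R S) := by
  rw [← Algebra.TensorProduct.quotIdealMapEquivTensorQuot_mk,
    map_eq_zero_iff _ (AlgEquiv.injective _), Ideal.Quotient.eq_zero_iff_mem]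

theorem Ideal.mem_colon_range {ι : Type*} (I : Ideal R) (x : ι → R) (r : R) :
    r ∈ I.colon (Set.range x) ↔ ∀ i, x i * r ∈ I := by
  simp [Submodule.mem_colon, mul_comm]

def Ideal.mulQuotPi {ι : Type*} (I : Ideal R) (x : ι → R) : R →ₗ[R] ι → R ⧸ I :=
  LinearMap.pi fun i ↦ I.mkQ ∘ₗ LinearMap.mulLeft R (x i)

theorem Ideal.ker_mulQuotPi {ι : Type*} (I : Ideal R) (x : ι → R) :
    LinearMap.ker (I.mulQuotPi x) = I.colon (Set.range x) := by
  ext r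
  simp only [LinearMap.mem_ker, mulQuotPi, funext_iff, LinearMap.pi_apply, LinearMap.comp_apply,
    Submodule.mkQ_apply, LinearMap.mulLeft_apply, Pi.zero_apply, Submodule.Quotient.mk_eq_zero,
    mem_colon_range]

theorem Ideal.mem_map_colon_of_flat [Module.Flat R S] {ι : Type*} [Fintype ι] (I : Ideal R)
    (x : ι → R) (s : S) (hs : ∀ i, algebraMap R S (x i) * s ∈ I.map (algebraMap R S)) :
    s ∈ (I.colon (Set.range x)).map (algebraMap R S) := by
  classical
  set A := I.colon (Set.range x)
  let φ : R ⧸ A →ₗ[R] ι → R ⧸ I := A.liftQ (I.mulQuotPi x) (I.ker_mulQuotPi x).ge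
  have hφ : Function.Injective φ := by
    rw [← LinearMap.ker_eq_bot]
    exact Submodule.ker_liftQ_eq_bot _ _ _ (I.ker_mulQuotPi x).le
  have hvanish : ∀ i, s ⊗ₜ[R] (Pi.single i (x i • 1) : ι → R ⧸ I) = 0 := by
    intro i
    rw [Pi.single_smul, ← smul_tmul, Algebra.smul_def,
      ← LinearMap.single_apply R (fun _ : ι ↦ R ⧸ I),
      ← LinearMap.lTensor_tmul S (LinearMap.single R (fun _ ↦ R ⧸ I) i),
      (I.tmul_one_eq_zero_iff_mem_map _).2 (hs i), map_zero]
  rw [← Ideal.tmul_one_eq_zero_iff_mem_map]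
  apply Module.Flat.lTensor_preserves_injective_linearMap φ hφ
  have : φ 1 = ∑ i, (Pi.single i (x i • 1) : ι → R ⧸ I) := by
    rw [Finset.univ_sum_single]
    rfl
  rw [LinearMap.lTensor_tmul, map_zero, this, tmul_sum]
  exact Finset.sum_eq_zero fun i _ ↦ hvanish i

theorem Ideal.map_colon_of_flat [Module.Flat R S] (I J : Ideal R) (hJ : J.FG) :
    (I.colon (J : Set R)).map (algebraMap R S) =
      (I.map (algebraMap R S)).colon (J.map (algebraMap R S) : Set S) := by
  obtain ⟨n, x, rfl⟩ := Submodule.fg_iff_exists_fin_generating_family.1 hJ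
  rw [Ideal.submodule_span_eq, Ideal.map_span, Ideal.colon_span, Ideal.colon_span,
    ← Set.range_comp]
  refine le_antisymm (Ideal.map_le_iff_le_comap.2 fun r hr ↦ ?_) fun s hs ↦
    I.mem_map_colon_of_flat x s ((Ideal.mem_colon_range _ _ _).1 hs)
  rw [Ideal.mem_comap, Ideal.mem_colon_range]
  intro i
  rw [Function.comp_apply, ← map_mul]
  exact Ideal.mem_map_of_mem _ ((Ideal.mem_colon_range _ _ _).1 hr i)

end Flat

theorem Ideal.exists_mul_mem_colon_notMem {R : Type*} [CommRing R] {m I : Ideal R} {x : R}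
    {n : ℕ} (hn : ∀ a ∈ m ^ n, a * x ∈ I) (hx : x ∉ I) :
    ∃ z, z * x ∉ I ∧ z * x ∈ I.colon (m : Set R) := by
  induction n generalizing x with
  | zero => exact absurd (by simpa using hn 1 (by simp)) hx
  | succ n ih =>
    by_cases hxm : x ∈ I.colon (m : Set R)
    · exact ⟨1, by simpa using hx, by simpa using hxm⟩
    obtain ⟨y, hy, hyx⟩ : ∃ y ∈ m, y * x ∉ I := by
      simpa [Submodule.mem_colon, mul_comm] using hxm
    obtain ⟨z, hzI, hzm⟩ := ih (x := y * x) (fun a ha ↦ by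
      simpa [mul_assoc] using hn (a * y) (pow_succ m n ▸ Ideal.mul_mem_mul ha hy)) hyx
    exact ⟨z * y, by simpa [mul_assoc] using hzI, by simpa [mul_assoc] using hzm⟩

namespace IsLocalRing

variable {R : Type*} [CommRing R] [IsLocalRing R] {I : Ideal R}

theorem sup_span_singleton_eq_of_mem_colon {u y : R}
    (hu : u ∈ I.colon (maximalIdeal R : Set R)) (hy : y ∈ I ⊔ Ideal.span {u})
    (hyI : y ∉ I) :
    I ⊔ Ideal.span {y} = I ⊔ Ideal.span {u} := by
  refine le_antisymm (sup_le le_sup_left (Ideal.span_singleton_le_iff_mem _ |>.2 hy)) ?_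
  obtain ⟨a, ha, _, hb, rfl⟩ := Submodule.mem_sup.1 hy
  obtain ⟨r, rfl⟩ := Ideal.mem_span_singleton'.1 hb
  have hr : IsUnit r := by
    refine notMem_maximalIdeal.1 fun hrm ↦ hyI (I.add_mem ha ?_)
    exact mul_comm u r ▸ Submodule.mem_colon.1 hu r hrm
  obtain ⟨c, hc⟩ := hr.exists_left_inv
  have hu' : u = c * (a + r * u) - c * a := by linear_combination (-u) * hc
  have hmem : c * (a + r * u) - c * a ∈ I ⊔ Ideal.span {a + r * u} := Ideal.sub_mem _
    (Ideal.mul_mem_left _ _ (Ideal.mem_sup_right (Ideal.mem_span_singleton_self _)))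
    (Ideal.mul_mem_left _ _ (Ideal.mem_sup_left ha))
  rw [← hu'] at hmem
  exact sup_le le_sup_left (Ideal.span_singleton_le_iff_mem _ |>.2 hmem)

theorem exists_colon_maximalIdeal_eq_sup_span_of_infIrred {n : ℕ}
    (hn : maximalIdeal R ^ n ≤ I) (hirr : InfIrred I) :
    ∃ u ∉ I, I.colon (maximalIdeal R : Set R) = I ⊔ Ideal.span {u} := by
  obtain ⟨u, huI, hu⟩ := Ideal.exists_mul_mem_colon_notMem (x := 1) (fun a ha ↦ by
    simpa using hn ha) ((Ideal.ne_top_iff_one I).1 (isMax_iff_eq_top.not.1 hirr.1))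
  rw [mul_one] at huI hu
  refine ⟨u, huI, le_antisymm (fun v hv ↦ ?_) (sup_le Ideal.le_colon
    ((Ideal.span_singleton_le_iff_mem _).2 hu))⟩
  by_contra hvu
  have hinf : (I ⊔ Ideal.span {u}) ⊓ (I ⊔ Ideal.span {v}) = I := by
    refine le_antisymm (fun y ⟨hyu, hyv⟩ ↦ ?_) (le_inf le_sup_left le_sup_left)
    by_contra hyI
    apply hvu
    rw [← sup_span_singleton_eq_of_mem_colon hu hyu hyI,
      sup_span_singleton_eq_of_mem_colon hv hyv hyI]
    exact Ideal.mem_sup_right (Ideal.mem_span_singleton_self v)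
  rcases hirr.2 hinf with h | h
  · exact huI (h ▸ Ideal.mem_sup_right (Ideal.mem_span_singleton_self u))
  · exact hvu (Ideal.mem_sup_left (h ▸ Ideal.mem_sup_right (Ideal.mem_span_singleton_self v)))

theorem infIrred_of_colon_maximalIdeal_eq_sup_span {n : ℕ} {u : R}
    (hn : maximalIdeal R ^ n ≤ I) (huI : u ∉ I)
    (hcolon : I.colon (maximalIdeal R : Set R) = I ⊔ Ideal.span {u}) : InfIrred I := by
  have hu : u ∈ I.colon (maximalIdeal R : Set R) :=
    hcolon ▸ Ideal.mem_sup_right (Ideal.mem_span_singleton_self u)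
  have mem_of_lt : ∀ J, I < J → u ∈ J := by
    intro J hIJ
    obtain ⟨x, hxJ, hxI⟩ := SetLike.exists_of_lt hIJ
    obtain ⟨z, hzI, hzm⟩ :=
      Ideal.exists_mul_mem_colon_notMem (fun a ha ↦ I.mul_mem_right x (hn ha)) hxI
    have hsup := sup_span_singleton_eq_of_mem_colon hu (hcolon ▸ hzm) hzI
    exact sup_le hIJ.le ((Ideal.span_singleton_le_iff_mem _).2 (J.mul_mem_left z hxJ))
      (hsup ▸ Ideal.mem_sup_right (Ideal.mem_span_singleton_self u))
  refine ⟨fun hmax ↦ huI (isMax_iff_eq_top.1 hmax ▸ Submodule.mem_top), fun J K hJK ↦ ?_⟩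
  by_contra! hne
  have hIJ : I ≤ J := hJK ▸ inf_le_left
  have hIK : I ≤ K := hJK ▸ inf_le_right
  exact huI (hJK ▸ ⟨mem_of_lt J (hIJ.lt_of_ne' hne.1), mem_of_lt K (hIK.lt_of_ne' hne.2)⟩)

end IsLocalRing

theorem map_irreducible_ideal_general (R S : Type u) [CommRing R] [CommRing S] [IsLocalRing R]
    [IsLocalRing S] [IsNoetherianRing R] [Algebra R S]
    (hff : Module.FaithfullyFlat R S)
    (hmax : (maximalIdeal R).map (algebraMap R S) = maximalIdeal S)
    (I : Ideal R) (hI₁ : I ≤ maximalIdeal R) (hI₂ : ∃ n, maximalIdeal R ^ n ≤ I)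
    (hirr : ∀ J K : Ideal R, I = J ⊓ K → I = J ∨ I = K) :
    (I.map (algebraMap R S) ≤ maximalIdeal S ∧
      ∃ n, maximalIdeal S ^ n ≤ I.map (algebraMap R S)) ∧
    ∀ J K : Ideal S, I.map (algebraMap R S) = J ⊓ K →
      I.map (algebraMap R S) = J ∨ I.map (algebraMap R S) = K := by
  obtain ⟨n, hn⟩ := hI₂
  have hnS : maximalIdeal S ^ n ≤ I.map (algebraMap R S) := by
    rw [← hmax, ← Ideal.map_pow]
    exact Ideal.map_mono hn
  have hI : InfIrred I := ⟨fun h ↦ (maximalIdeal.isMaximal R).ne_top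
      (top_le_iff.1 (isMax_iff_eq_top.1 h ▸ hI₁)),
    fun J K h ↦ (hirr J K h.symm).imp Eq.symm Eq.symm⟩
  obtain ⟨u, huI, hcolon⟩ := exists_colon_maximalIdeal_eq_sup_span_of_infIrred hn hI
  have hcolonS : (I.map (algebraMap R S)).colon (maximalIdeal S : Set S) =
      I.map (algebraMap R S) ⊔ Ideal.span {algebraMap R S u} := by
    rw [← hmax, ← Ideal.map_colon_of_flat _ _ (IsNoetherian.noetherian _), hcolon,
      Ideal.map_sup, Ideal.map_span, Set.image_singleton]
  have huS : algebraMap R S u ∉ I.map (algebraMap R S) := fun h ↦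
    huI (Ideal.comap_map_eq_self_of_faithfullyFlat (B := S) I ▸ Ideal.mem_comap.2 h)
  refine ⟨⟨hmax ▸ Ideal.map_mono hI₁, n, hnS⟩, fun J K h ↦ ?_⟩
  exact ((infIrred_of_colon_maximalIdeal_eq_sup_span hnS huS hcolonS).2 h.symm).imp
    Eq.symm Eq.symm

/-- Irreducible `m`-primary ideals stay irreducible and `mS`-primary under a faithfully flat
local map with `mS` the maximal ideal of `S`. -/
theorem map_irreducible_ideal (R S : Type u) [CommRing R] [CommRing S] [IsLocalRing R]
    [IsLocalRing S] [IsNoetherianRing R] (p : ℕ) [Fact p.Prime] [CharP R p] [Algebra R S]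
    (hff : Module.FaithfullyFlat R S) (hloc : IsLocalHom (algebraMap R S))
    (hmax : (maximalIdeal R).map (algebraMap R S) = maximalIdeal S)
    (I : Ideal R) (hI₁ : I ≤ maximalIdeal R) (hI₂ : ∃ n, maximalIdeal R ^ n ≤ I)
    (hirr : ∀ J K : Ideal R, I = J ⊓ K → I = J ∨ I = K) :
    (I.map (algebraMap R S) ≤ maximalIdeal S ∧
      ∃ n, maximalIdeal S ^ n ≤ I.map (algebraMap R S)) ∧
    ∀ J K : Ideal S, I.map (algebraMap R S) = J ⊓ K →
      I.map (algebraMap R S) = J ∨ I.map (algebraMap R S) = K :=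
  map_irreducible_ideal_general R S hff hmax I hI₁ hI₂ hirr
end
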